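/- arXiv:2512.20960 — 4 statements merged into one kernel-verified Lean document; each statement's English description precedes it below -/
import Mathlib

section
/- Let (M,d) be a metric space in which every pairwise distance is at most D (for some D ≥ 0). Fix an integer k ≥ 1, a request sequence σ = (σ_1,…,σ_T) in M, initial server positions, and a real ε > 0. Set b = (2+2ε)/(2+ε) and β = 2(1+ε)·D·(3/2 + log_b k). Then for every k-server schedule S serving σ with total cost C, there exists a k-server schedule S' serving σ with the same initial positions such that (i) the total cost of S' is at most C + 2·D·k·(1 + log_b k), and (ii) every server i satisfies c_i(S') ≤ (1+ε)·C/k + β. -/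
/-!
Peel off the servers one at a time, keeping the average cost of the `m` servers not yet peeled
at most a threshold `g m`, starting from `g k = C / k` for the total cost `C`. If the most expensive of them costs at
most `g m + D`, it is peeled as is. Otherwise it exchanges its future route with that of the
cheapest one (which costs at most `g m`) from some time `t₀` on. Delaying the exchange by one
step changes its cost by at most `2D`, so `t₀` can be chosen to make that cost land in
`(g m - D, g m + D]`, while the exchange adds at most `2D` to the total cost. The other `m - 1`
servers then average at most `g m + 3D / (m - 1)`, so `g 1 = C / k + 3D·H_{k-1}`, and the
harmonic number is dominated by `log_b k` because `log b ≤ b - 1 = ε / (2 + ε)`.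
-/

/-- A `k`-server schedule `s` serves the request sequence `σ` (with requests at times
`1,…,T`) from initial positions `init`: positions extend the initial positions and at
every time `t ∈ {1,…,T}` some server is at the request point `σ t`. -/
def Serves {M : Type*} [MetricSpace M] {k : ℕ} (T : ℕ) (σ : ℕ → M) (init : Fin k → M)
    (s : Fin k → ℕ → M) : Prop :=
  (∀ i, s i 0 = init i) ∧ ∀ t, 1 ≤ t → t ≤ T → ∃ i, s i t = σ t

/-- Cost of server `i` in schedule `s`: `∑_{t=1}^T d(s i (t-1), s i t)`. -/
noncomputable def serverCost {M : Type*} [MetricSpace M] {k : ℕ} (T : ℕ)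
    (s : Fin k → ℕ → M) (i : Fin k) : ℝ :=
  ∑ t ∈ Finset.Icc 1 T, dist (s i (t - 1)) (s i t)

/-- Total cost of a schedule: sum of all server costs. -/
noncomputable def totalCost {M : Type*} [MetricSpace M] {k : ℕ} (T : ℕ)
    (s : Fin k → ℕ → M) : ℝ :=
  ∑ i, serverCost T s i

open Finset

theorem Nat.exists_le_lt_succ {P : ℕ → Prop} {a b : ℕ} (hab : a ≤ b) (ha : P a) (hb : ¬ P b) :
    ∃ t, a ≤ t ∧ t < b ∧ P t ∧ ¬ P (t + 1) := by
  induction b, hab using Nat.le_induction with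
  | base => exact absurd ha hb
  | succ b hab ih =>
    by_cases hPb : P b
    · exact ⟨b, hab, b.lt_succ_self, hPb, hb⟩
    · obtain ⟨t, hat, htb, hPt, hPt'⟩ := ih hPb
      exact ⟨t, hat, htb.trans b.lt_succ_self, hPt, hPt'⟩

theorem Real.log_div_sub_one_le_logb {b x : ℝ} (hb : 1 < b) (hx : 1 ≤ x) :
    Real.log x / (b - 1) ≤ Real.logb b x :=
  div_le_div_of_nonneg_left (Real.log_nonneg hx) (Real.log_pos hb)
    (Real.log_le_sub_one_of_pos (by linarith))

theorem Finset.sum_ite_eq_le {D : ℝ} (hD : 0 ≤ D) (s : Finset ℕ) (a : ℕ) :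
    ∑ t ∈ s, (if t = a then D else 0) ≤ D := by
  rw [sum_ite_eq']
  split_ifs <;> linarith

namespace KServer

variable {M : Type*}

def splice (x y : ℕ → M) (t₀ : ℕ) : ℕ → M :=
  fun τ => if τ < t₀ then x τ else y τ

section Swap

variable {k : ℕ} {s : Fin k → ℕ → M} {p w : Fin k} {t₀ : ℕ}

def swapAt (s : Fin k → ℕ → M) (p w : Fin k) (t₀ : ℕ) : Fin k → ℕ → M :=
  fun q => splice (s q) (s (Equiv.swap p w q)) t₀

lemma swapAt_left : swapAt s p w t₀ p = splice (s p) (s w) t₀ := by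
  simp [swapAt]

lemma swapAt_right : swapAt s p w t₀ w = splice (s w) (s p) t₀ := by
  simp [swapAt]

lemma swapAt_of_ne {q : Fin k} (hp : q ≠ p) (hw : q ≠ w) : swapAt s p w t₀ q = s q := by
  funext τ
  simp [swapAt, splice, Equiv.swap_apply_of_ne_of_ne hp hw]

end Swap

variable [MetricSpace M] {D : ℝ}

noncomputable def pathCost (T : ℕ) (x : ℕ → M) : ℝ :=
  ∑ t ∈ Icc 1 T, dist (x (t - 1)) (x t)

section Path

variable {T : ℕ} {x y : ℕ → M}

lemma pathCost_congr (h : ∀ τ ≤ T, x τ = y τ) : pathCost T x = pathCost T y :=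
  sum_congr rfl fun t ht => by
    rw [mem_Icc] at ht
    rw [h (t - 1) (by omega), h t ht.2]

lemma pathCost_le_of_eq_of_ne (hD : 0 ≤ D) (hdiam : ∀ a b : M, dist a b ≤ D) {τ : ℕ}
    (h : ∀ t ≠ τ, x t = y t) : pathCost T x ≤ pathCost T y + 2 * D := by
  have step : ∀ t ∈ Icc 1 T, dist (x (t - 1)) (x t) ≤
      dist (y (t - 1)) (y t) + ((if t = τ then D else 0) + (if t = τ + 1 then D else 0)) := by
    intro t ht
    rw [mem_Icc] at ht
    have := hdiam (x (t - 1)) (x t)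
    have := dist_nonneg (x := y (t - 1)) (y := y t)
    by_cases h₁ : t = τ
    · rw [if_pos h₁, if_neg (by omega)]; linarith
    by_cases h₂ : t = τ + 1
    · rw [if_neg h₁, if_pos h₂]; linarith
    rw [if_neg h₁, if_neg h₂, h t h₁, h (t - 1) (by omega)]
    linarith
  calc pathCost T x
      ≤ ∑ t ∈ Icc 1 T, (dist (y (t - 1)) (y t)
          + ((if t = τ then D else 0) + (if t = τ + 1 then D else 0))) := sum_le_sum step
    _ = pathCost T y + (∑ t ∈ Icc 1 T, (if t = τ then D else 0)
          + ∑ t ∈ Icc 1 T, (if t = τ + 1 then D else 0)) := by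
      rw [sum_add_distrib, sum_add_distrib]; rfl
    _ ≤ pathCost T y + 2 * D := by
      linarith [Finset.sum_ite_eq_le hD (Icc 1 T) τ, Finset.sum_ite_eq_le hD (Icc 1 T) (τ + 1)]

lemma pathCost_splice_le (hD : 0 ≤ D) (hdiam : ∀ a b : M, dist a b ≤ D) (t₀ : ℕ) :
    pathCost T (splice x y t₀) ≤ ∑ t ∈ Icc 1 T,
      (if t < t₀ then dist (x (t - 1)) (x t) else dist (y (t - 1)) (y t)) + D := by
  have step : ∀ t ∈ Icc 1 T, dist (splice x y t₀ (t - 1)) (splice x y t₀ t) ≤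
      (if t < t₀ then dist (x (t - 1)) (x t) else dist (y (t - 1)) (y t))
        + (if t = t₀ then D else 0) := by
    intro t ht
    rw [mem_Icc] at ht
    simp only [splice]
    rcases lt_trichotomy t t₀ with h | rfl | h
    · rw [if_pos (by omega), if_pos h, if_pos h, if_neg h.ne, add_zero]
    · rw [if_pos (by omega), if_neg (lt_irrefl t), if_neg (lt_irrefl t), if_pos rfl]
      linarith [hdiam (x (t - 1)) (y t), dist_nonneg (x := y (t - 1)) (y := y t)]
    · rw [if_neg (by omega), if_neg h.not_gt, if_neg h.not_gt, if_neg h.ne', add_zero]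
  calc pathCost T (splice x y t₀)
      ≤ ∑ t ∈ Icc 1 T, ((if t < t₀ then dist (x (t - 1)) (x t) else dist (y (t - 1)) (y t))
          + (if t = t₀ then D else 0)) := sum_le_sum step
    _ ≤ _ := by rw [sum_add_distrib]; linarith [Finset.sum_ite_eq_le hD (Icc 1 T) t₀]

lemma pathCost_splice_add_le (hD : 0 ≤ D) (hdiam : ∀ a b : M, dist a b ≤ D) (t₀ : ℕ) :
    pathCost T (splice x y t₀) + pathCost T (splice y x t₀)
      ≤ pathCost T x + pathCost T y + 2 * D := by
  have hxy := pathCost_splice_le (x := x) (y := y) (T := T) hD hdiam t₀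
  have hyx := pathCost_splice_le (x := y) (y := x) (T := T) hD hdiam t₀
  have hsum : (∑ t ∈ Icc 1 T,
        (if t < t₀ then dist (x (t - 1)) (x t) else dist (y (t - 1)) (y t)))
      + ∑ t ∈ Icc 1 T, (if t < t₀ then dist (y (t - 1)) (y t) else dist (x (t - 1)) (x t))
      = pathCost T x + pathCost T y := by
    rw [← sum_add_distrib, pathCost, pathCost, ← sum_add_distrib]
    exact sum_congr rfl fun t _ => by split_ifs <;> ring
  linarith

lemma pathCost_splice_one_le (hD : 0 ≤ D) (hdiam : ∀ a b : M, dist a b ≤ D) :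
    pathCost T (splice x y 1) ≤ pathCost T y + D := by
  have h := pathCost_splice_le (x := x) (y := y) (T := T) hD hdiam 1
  rwa [sum_congr rfl fun t ht => if_neg (by rw [mem_Icc] at ht; omega)] at h

lemma pathCost_splice_of_lt {t₀ : ℕ} (h : T < t₀) : pathCost T (splice x y t₀) = pathCost T x :=
  pathCost_congr fun τ hτ => if_pos (by omega)

lemma pathCost_splice_succ_le (hD : 0 ≤ D) (hdiam : ∀ a b : M, dist a b ≤ D) (t₀ : ℕ) :
    pathCost T (splice x y (t₀ + 1)) ≤ pathCost T (splice x y t₀) + 2 * D :=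
  pathCost_le_of_eq_of_ne hD hdiam (τ := t₀) fun t ht => by
    simp only [splice]
    split_ifs <;> first | rfl | omega

lemma exists_pathCost_splice_mem (hD : 0 ≤ D) (hdiam : ∀ a b : M, dist a b ≤ D) {θ : ℝ}
    (hy : pathCost T y + D ≤ θ) (hx : θ < pathCost T x) :
    ∃ t₀, 1 ≤ t₀ ∧ θ - 2 * D < pathCost T (splice x y t₀) ∧ pathCost T (splice x y t₀) ≤ θ := by
  obtain ⟨t₀, ht₀, -, hle, hlt⟩ :=
    Nat.exists_le_lt_succ (P := fun t => pathCost T (splice x y t) ≤ θ) (Nat.le_add_left 1 T)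
      ((pathCost_splice_one_le hD hdiam).trans hy)
      (by rw [pathCost_splice_of_lt T.lt_succ_self]; exact not_le.mpr hx)
  refine ⟨t₀, ht₀, ?_, hle⟩
  linarith [not_le.mp hlt, pathCost_splice_succ_le (x := x) (y := y) (T := T) hD hdiam t₀]

end Path

section Schedule

variable {k T : ℕ} {σ : ℕ → M} {init : Fin k → M} {s : Fin k → ℕ → M} {p w : Fin k} {t₀ : ℕ}

lemma serverCost_eq_pathCost (s : Fin k → ℕ → M) (i : Fin k) :
    serverCost T s i = pathCost T (s i) := rfl

lemma serverCost_swapAt_of_ne {q : Fin k} (hp : q ≠ p) (hw : q ≠ w) :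
    serverCost T (swapAt s p w t₀) q = serverCost T s q := by
  rw [serverCost_eq_pathCost, swapAt_of_ne hp hw]
  rfl

lemma serves_swapAt (hS : Serves T σ init s) (ht₀ : 1 ≤ t₀) :
    Serves T σ init (swapAt s p w t₀) := by
  refine ⟨fun i => by simp [swapAt, splice, show 0 < t₀ by omega, hS.1 i], fun t h₁ h₂ => ?_⟩
  obtain ⟨i, hi⟩ := hS.2 t h₁ h₂
  by_cases ht : t < t₀
  · exact ⟨i, by simp [swapAt, splice, ht, hi]⟩
  · exact ⟨Equiv.swap p w i, by simp [swapAt, splice, ht, hi]⟩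

lemma sum_serverCost_swapAt_le (hD : 0 ≤ D) (hdiam : ∀ a b : M, dist a b ≤ D)
    {R : Finset (Fin k)} (hp : p ∈ R) (hw : w ∈ R) (hpw : p ≠ w) :
    ∑ q ∈ R, serverCost T (swapAt s p w t₀) q ≤ ∑ q ∈ R, serverCost T s q + 2 * D := by
  have hw' : w ∈ R.erase p := mem_erase.mpr ⟨hpw.symm, hw⟩
  have hrest : ∑ q ∈ (R.erase p).erase w, serverCost T (swapAt s p w t₀) q
      = ∑ q ∈ (R.erase p).erase w, serverCost T s q :=
    sum_congr rfl fun q hq => by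
      obtain ⟨hqw, hq⟩ := mem_erase.mp hq
      exact serverCost_swapAt_of_ne (mem_erase.mp hq).1 hqw
  have hpair : serverCost T (swapAt s p w t₀) p + serverCost T (swapAt s p w t₀) w
      ≤ serverCost T s p + serverCost T s w + 2 * D := by
    simpa only [serverCost_eq_pathCost, swapAt_left, swapAt_right]
      using pathCost_splice_add_le (x := s p) (y := s w) (T := T) hD hdiam t₀
  rw [← add_sum_erase R _ hp, ← add_sum_erase _ _ hw', ← add_sum_erase R _ hp,
    ← add_sum_erase _ _ hw', hrest]
  linarith

lemma exists_peel (hD : 0 ≤ D) (hdiam : ∀ a b : M, dist a b ≤ D) (hS : Serves T σ init s)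
    {R : Finset (Fin k)} (hR : R.Nonempty) {g : ℝ}
    (hsum : ∑ q ∈ R, serverCost T s q ≤ #R * g) :
    ∃ p ∈ R, ∃ s', Serves T σ init s' ∧ (∀ q ∉ R, serverCost T s' q = serverCost T s q) ∧
      serverCost T s' p ≤ g + D ∧
      ∑ q ∈ R.erase p, serverCost T s' q ≤ (#R - 1) * g + 3 * D ∧
      ∑ q ∈ R, serverCost T s' q ≤ ∑ q ∈ R, serverCost T s q + 2 * D := by
  have hcard : (0 : ℝ) < #R := by exact_mod_cast hR.card_pos
  obtain ⟨p, hp, hmax⟩ := exists_max_image R (serverCost T s) hR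
  by_cases hcp : serverCost T s p ≤ g + D
  · refine ⟨p, hp, s, hS, fun _ _ => rfl, hcp, ?_, by linarith⟩
    have hle : ∑ q ∈ R, serverCost T s q ≤ #R * serverCost T s p := by
      simpa using sum_le_card_nsmul R _ _ hmax
    have hm : (0 : ℝ) ≤ #R - 1 := by
      have : (1 : ℝ) ≤ #R := by exact_mod_cast hR.card_pos
      linarith
    have hrest : #R * (∑ q ∈ R, serverCost T s q - serverCost T s p) ≤ #R * ((#R - 1) * g) := by
      nlinarith [mul_le_mul_of_nonneg_left hsum hm]
    rw [sum_erase_eq_sub hp]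
    linarith [le_of_mul_le_mul_left hrest hcard]
  rw [not_le] at hcp
  obtain ⟨w, hw, hmin⟩ := exists_min_image R (serverCost T s) hR
  have hwg : serverCost T s w ≤ g := by
    have hge : #R * serverCost T s w ≤ ∑ q ∈ R, serverCost T s q := by
      simpa using card_nsmul_le_sum R _ _ hmin
    nlinarith
  have hpw : p ≠ w := by rintro rfl; linarith
  obtain ⟨t₀, ht₀, hlow, hhigh⟩ := exists_pathCost_splice_mem (x := s p) (y := s w) hD hdiam
    (θ := g + D) (by rw [← serverCost_eq_pathCost]; linarith) hcp
  rw [← swapAt_left (p := p) (w := w), ← serverCost_eq_pathCost] at hlow hhigh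
  have htot := sum_serverCost_swapAt_le (s := s) (T := T) (t₀ := t₀) hD hdiam hp hw hpw
  refine ⟨p, hp, swapAt s p w t₀, serves_swapAt hS ht₀, fun q hq => ?_, hhigh, ?_, htot⟩
  · exact serverCost_swapAt_of_ne (by rintro rfl; exact hq hp) (by rintro rfl; exact hq hw)
  · rw [sum_erase_eq_sub hp]
    linarith

theorem exists_serves_serverCost_le (hD : 0 ≤ D) (hdiam : ∀ a b : M, dist a b ≤ D) {g : ℕ → ℝ}
    (hg : ∀ m : ℕ, 1 ≤ m → g (m + 1) + 3 * D / m ≤ g m) (R : Finset (Fin k))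
    (hS : Serves T σ init s) (hsum : ∑ q ∈ R, serverCost T s q ≤ #R * g #R) :
    ∃ s', Serves T σ init s' ∧ (∀ q ∉ R, serverCost T s' q = serverCost T s q) ∧
      (∀ q ∈ R, serverCost T s' q ≤ g 1 + D) ∧
      ∑ q ∈ R, serverCost T s' q ≤ ∑ q ∈ R, serverCost T s q + 2 * D * #R := by
  have hanti : AntitoneOn g (Set.Ici 1) := antitoneOn_nat_Ici_of_succ_le fun m hm => by
    linarith [hg m hm, show 0 ≤ 3 * D / m by positivity]
  obtain ⟨n, hn⟩ : ∃ n, #R = n := ⟨_, rfl⟩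
  induction n generalizing R s with
  | zero =>
    rw [card_eq_zero.mp hn]
    exact ⟨s, hS, fun _ _ => rfl, by simp, by simp⟩
  | succ n ih =>
    obtain ⟨p, hp, s₁, hS₁, hout₁, hp₁, herase₁, htot₁⟩ :=
      exists_peel hD hdiam hS (card_pos.mp (by omega)) hsum
    have hcard : #(R.erase p) = n := by rw [card_erase_of_mem hp, hn]; rfl
    have hsum₁ : ∑ q ∈ R.erase p, serverCost T s₁ q ≤ #(R.erase p) * g #(R.erase p) := by
      rcases Nat.eq_zero_or_pos n with rfl | hn₀
      · simp [card_eq_zero.mp hcard]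
      · have hstep := mul_le_mul_of_nonneg_left (hg n hn₀) n.cast_nonneg
        rw [mul_add, mul_div_cancel₀ _ (by positivity)] at hstep
        rw [hn] at herase₁
        push_cast at herase₁
        rw [hcard]
        linarith
    obtain ⟨s', hS', hout', hle', htot'⟩ := ih (R.erase p) hS₁ hsum₁ hcard
    have hp' : serverCost T s' p = serverCost T s₁ p := hout' p (notMem_erase p R)
    refine ⟨s', hS', fun q hq => ?_, fun q hq => ?_, ?_⟩
    · rw [hout' q (fun h => hq (mem_of_mem_erase h)), hout₁ q hq]
    · rcases eq_or_ne q p with rfl | hqp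
      · rw [hn] at hp₁
        linarith [hanti (Set.mem_Ici.mpr le_rfl) (Set.mem_Ici.mpr (Nat.le_add_left 1 n))
          (Nat.le_add_left 1 n)]
      · exact hle' q (mem_erase.mpr ⟨hqp, hq⟩)
    · rw [hcard] at htot'
      rw [hn]
      push_cast
      linarith [add_sum_erase R (serverCost T s') hp, add_sum_erase R (serverCost T s₁) hp]

end Schedule

end KServer

theorem one_lt_two_add_two_mul_div_two_add {ε : ℝ} (hε : 0 < ε) : 1 < (2 + 2 * ε) / (2 + ε) := by
  rw [lt_div_iff₀ (by linarith)]
  linarith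

theorem three_mul_harmonic_pred_le_logb {k : ℕ} (hk : 1 ≤ k) {ε : ℝ} (hε : 0 < ε) :
    3 * (harmonic (k - 1) : ℝ) ≤ 2 * (1 + ε) * Real.logb ((2 + 2 * ε) / (2 + ε)) k := by
  rcases (show k = 1 ∨ 2 ≤ k by omega) with rfl | hk₂
  · simp
  have hk₂' : (2 : ℝ) ≤ k := by exact_mod_cast hk₂
  have hlog : 1 / 2 ≤ Real.log k := by
    linarith [Real.log_two_gt_d9, Real.log_le_log (by norm_num) hk₂']
  have hH : (harmonic (k - 1) : ℝ) ≤ 3 * Real.log k := by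
    calc (harmonic (k - 1) : ℝ) ≤ 1 + Real.log (k - 1 : ℕ) := harmonic_le_one_add_log _
      _ ≤ 1 + Real.log k := by
        gcongr
        · exact_mod_cast (by omega : 0 < k - 1)
        · exact_mod_cast k.sub_le 1
      _ ≤ 3 * Real.log k := by linarith
  have hb : (2 + 2 * ε) / (2 + ε) - 1 = ε / (2 + ε) := by field_simp; ring
  have hlogb := Real.log_div_sub_one_le_logb (b := (2 + 2 * ε) / (2 + ε)) (x := k)
    (one_lt_two_add_two_mul_div_two_add hε) (by exact_mod_cast hk)
  rw [hb, div_div_eq_mul_div] at hlogb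
  calc 3 * (harmonic (k - 1) : ℝ) ≤ 9 * Real.log k := by linarith
    _ ≤ 2 * (1 + ε) * (2 + ε) / ε * Real.log k := by
      gcongr
      rw [le_div_iff₀ hε]
      nlinarith [sq_nonneg (ε - 1)]
    _ = 2 * (1 + ε) * (Real.log k * (2 + ε) / ε) := by ring
    _ ≤ 2 * (1 + ε) * Real.logb ((2 + 2 * ε) / (2 + ε)) k := by gcongr

/-- Offline fair transformation: any schedule of total cost `C` can be turned into a
schedule with the same initial positions, total cost at most
`C + 2·D·k·(1 + log_b k)`, in which every server pays at most
`(1+ε)·C/k + 2(1+ε)·D·(3/2 + log_b k)`, where `b = (2+2ε)/(2+ε)`. -/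
theorem offline_fair_transformation
    {M : Type*} [MetricSpace M] (D : ℝ) (hD : 0 ≤ D)
    (hdiam : ∀ x y : M, dist x y ≤ D)
    (k : ℕ) (hk : 1 ≤ k) (T : ℕ) (σ : ℕ → M) (init : Fin k → M)
    (ε : ℝ) (hε : 0 < ε)
    (s : Fin k → ℕ → M) (hS : Serves T σ init s) :
    ∃ s' : Fin k → ℕ → M, Serves T σ init s' ∧
      totalCost T s' ≤ totalCost T s
        + 2 * D * k * (1 + Real.logb ((2 + 2 * ε) / (2 + ε)) k) ∧
      ∀ i : Fin k, serverCost T s' i ≤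
        (1 + ε) * totalCost T s / k
          + 2 * (1 + ε) * D * (3 / 2 + Real.logb ((2 + 2 * ε) / (2 + ε)) k) := by
  have hk₀ : (0 : ℝ) < k := by exact_mod_cast hk
  set C := totalCost T s
  set g : ℕ → ℝ := fun m => C / k + 3 * D * (harmonic (k - 1) - harmonic (m - 1)) with hg_def
  have hg : ∀ m : ℕ, 1 ≤ m → g (m + 1) + 3 * D / m ≤ g m := by
    intro m hm
    obtain ⟨j, rfl⟩ := Nat.exists_eq_add_of_le' hm
    simp only [hg_def, Nat.add_sub_cancel, harmonic_succ]
    push_cast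
    exact le_of_eq (by ring)
  obtain ⟨s', hS', -, hle, htot⟩ := KServer.exists_serves_serverCost_le hD hdiam hg univ hS
    (by simp [hg_def, mul_div_cancel₀ _ hk₀.ne', C, totalCost])
  refine ⟨s', hS', ?_, fun i => ?_⟩
  · have hlogb := Real.logb_nonneg (one_lt_two_add_two_mul_div_two_add hε)
      (by exact_mod_cast hk : (1 : ℝ) ≤ k)
    rw [card_univ, Fintype.card_fin] at htot
    change totalCost T s' ≤ C + 2 * D * k at htot
    nlinarith [mul_nonneg (mul_nonneg hD hk₀.le) hlogb]
  · have hi := hle i (mem_univ i)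
    simp only [hg_def, Nat.sub_self, harmonic_zero, Rat.cast_zero, sub_zero] at hi
    have hC : 0 ≤ C / k := div_nonneg (sum_nonneg fun _ _ => sum_nonneg fun _ _ => dist_nonneg)
      hk₀.le
    rw [mul_div_assoc]
    nlinarith [mul_le_mul_of_nonneg_left (three_mul_harmonic_pred_le_logb hk hε) hD,
      mul_nonneg hε.le hC, mul_nonneg hε.le hD]
end

section
/- Let n ≥ 1 be an integer, c ≥ 0 a real, and let A_1,…,A_n and B_1,…,B_n be real numbers with 0 ≤ A_i ≤ c and 0 ≤ B_i ≤ c for all i. Then there exists an index z ∈ {0,1,…,n} such that |(Σ_{i=1}^{z} A_i + Σ_{i=z+1}^{n} B_i) − (Σ_{i=1}^{z} B_i + Σ_{i=z+1}^{n} A_i)| ≤ c. -/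
/-!
The imbalance `f z` of the split at `z` satisfies `f n = -f 0`, and moving the split by one
index changes it by `2 (A_{z+1} - B_{z+1}) ∈ [-2c, 2c]`. A sequence that changes sign in steps
of size at most `2c` must pass through `[-c, c]`: at the first index where it is nonnegative,
either that value or the previous (negative) one is within `c` of `0`.
-/

open Finset

lemma exists_abs_le_of_nonpos_of_nonneg {α : Type*} [Field α] [LinearOrder α] [IsStrictOrderedRing α]
    {f : ℕ → α} {n : ℕ} {c : α} (hc : 0 ≤ c) (h₀ : f 0 ≤ 0) (hn : 0 ≤ f n)
    (hstep : ∀ z < n, f (z + 1) - f z ≤ 2 * c) : ∃ z ≤ n, |f z| ≤ c := by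
  classical
  have hex : ∃ z, z ≤ n ∧ 0 ≤ f z := ⟨n, le_rfl, hn⟩
  obtain ⟨hzn, hz⟩ := Nat.find_spec hex
  rcases hfind : Nat.find hex with _ | m
  · rw [hfind] at hz
    exact ⟨0, n.zero_le, by rw [abs_of_nonpos h₀]; linarith⟩
  · rw [hfind] at hzn hz
    have hfm : f m < 0 := by
      have hm := Nat.find_min hex (show m < Nat.find hex by omega)
      exact lt_of_not_ge fun h => hm ⟨by omega, h⟩
    rcases le_or_gt (f (m + 1)) c with hle | hgt
    · exact ⟨m + 1, hzn, by rwa [abs_of_nonneg hz]⟩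
    · refine ⟨m, by omega, ?_⟩
      have hrise := hstep m (by omega)
      rw [abs_of_neg hfm]
      linarith

lemma exists_abs_le_of_eq_neg {α : Type*} [Field α] [LinearOrder α] [IsStrictOrderedRing α]
    {f : ℕ → α} {n : ℕ} {c : α} (hc : 0 ≤ c) (hn : f n = -f 0)
    (hstep : ∀ z < n, |f (z + 1) - f z| ≤ 2 * c) : ∃ z ≤ n, |f z| ≤ c := by
  rcases le_total (f 0) 0 with h₀ | h₀
  · exact exists_abs_le_of_nonpos_of_nonneg hc h₀ (by linarith)
      fun z hz => (abs_le.mp (hstep z hz)).2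
  · obtain ⟨z, hzn, hz⟩ := exists_abs_le_of_nonpos_of_nonneg (f := fun z => -f z) (n := n) hc
      (by simpa using h₀) (by simpa [hn] using h₀)
      fun z hz => by linarith [(abs_le.mp (hstep z hz)).1]
    exact ⟨z, hzn, by simpa using hz⟩

def splitImbalance (A B : ℕ → ℝ) (n z : ℕ) : ℝ :=
  (∑ i ∈ Icc 1 z, A i + ∑ i ∈ Icc (z + 1) n, B i) - (∑ i ∈ Icc 1 z, B i + ∑ i ∈ Icc (z + 1) n, A i)

lemma splitImbalance_self (A B : ℕ → ℝ) (n : ℕ) :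
    splitImbalance A B n n = -splitImbalance A B n 0 := by
  simp [splitImbalance]

lemma splitImbalance_succ_sub {A B : ℕ → ℝ} {n z : ℕ} (hz : z < n) :
    splitImbalance A B n (z + 1) - splitImbalance A B n z = 2 * (A (z + 1) - B (z + 1)) := by
  simp only [splitImbalance, sum_Icc_succ_top (Nat.le_add_left 1 z),
    ← insert_Icc_add_one_left_eq_Icc (show z + 1 ≤ n by omega),
    sum_insert (show z + 1 ∉ Icc (z + 1 + 1) n by simp)]
  ring

theorem exists_balanced_split_general (n : ℕ) (c : ℝ) (hc : 0 ≤ c)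
    (A B : ℕ → ℝ)
    (hA : ∀ i ∈ Finset.Icc 1 n, 0 ≤ A i ∧ A i ≤ c)
    (hB : ∀ i ∈ Finset.Icc 1 n, 0 ≤ B i ∧ B i ≤ c) :
    ∃ z ≤ n,
      |(∑ i ∈ Finset.Icc 1 z, A i + ∑ i ∈ Finset.Icc (z + 1) n, B i)
        - (∑ i ∈ Finset.Icc 1 z, B i + ∑ i ∈ Finset.Icc (z + 1) n, A i)| ≤ c := by
  refine exists_abs_le_of_eq_neg (f := splitImbalance A B n) hc (splitImbalance_self A B n)
    fun z hz => ?_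
  have hmem : z + 1 ∈ Icc 1 n := mem_Icc.mpr ⟨by omega, hz⟩
  obtain ⟨hA₀, hAc⟩ := hA _ hmem
  obtain ⟨hB₀, hBc⟩ := hB _ hmem
  rw [splitImbalance_succ_sub hz, abs_mul, abs_two]
  gcongr
  exact abs_sub_le_of_nonneg_of_le hA₀ hAc hB₀ hBc

/-- Balancing lemma: for two sequences `A`, `B` of reals in `[0, c]` of length `n`
there is a split index `z ∈ {0,…,n}` such that swapping the suffixes after `z`
balances the two totals up to an additive `c`. -/
theorem exists_balanced_split (n : ℕ) (hn : 1 ≤ n) (c : ℝ) (hc : 0 ≤ c)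
    (A B : ℕ → ℝ)
    (hA : ∀ i ∈ Finset.Icc 1 n, 0 ≤ A i ∧ A i ≤ c)
    (hB : ∀ i ∈ Finset.Icc 1 n, 0 ≤ B i ∧ B i ≤ c) :
    ∃ z ≤ n,
      |(∑ i ∈ Finset.Icc 1 z, A i + ∑ i ∈ Finset.Icc (z + 1) n, B i)
        - (∑ i ∈ Finset.Icc 1 z, B i + ∑ i ∈ Finset.Icc (z + 1) n, A i)| ≤ c :=
  exists_balanced_split_general n c hc A B hA hB
end

section
/- Let n ≥ 1 be an integer, c ≥ 0 a real, and let A_1,…,A_n and B_1,…,B_n be real numbers with 0 ≤ A_i ≤ c and 0 ≤ B_i ≤ c for all i. Then there exists an index z ∈ {0,1,…,n} such that both Σ_{i=1}^{z} A_i + Σ_{i=z+1}^{n} B_i ≤ (Σ_{i=1}^{n} A_i + Σ_{i=1}^{n} B_i)/2 + c/2 and Σ_{i=1}^{z} B_i + Σ_{i=z+1}^{n} A_i ≤ (Σ_{i=1}^{n} A_i + Σ_{i=1}^{n} B_i)/2 + c/2. -/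
/-!
Let `f z = splitSum A B n z` be the first swapped total. Then `f 0 = ∑ B`, `f n = ∑ A`,
and each step `f (z + 1) - f z = A (z + 1) - B (z + 1)` lies in `[-c, c]`. The average
`T / 2` of the two original totals lies between `f 0` and `f n`, so a walk with steps of size
at most `c` must pass within `c / 2` of it. Since the two swapped totals always add up to `T`,
both are then at most `T / 2 + c / 2`.
-/

open Finset

theorem exists_abs_sub_le_half_of_le_of_le {h : ℕ → ℝ} {c t : ℝ} (hc : 0 ≤ c) :
    ∀ {n : ℕ}, (∀ z < n, |h (z + 1) - h z| ≤ c) → h 0 ≤ t → t ≤ h n →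
      ∃ z ≤ n, |h z - t| ≤ c / 2
  | 0, _, h0, ht => ⟨0, le_rfl, by rw [le_antisymm h0 ht, sub_self, abs_zero]; positivity⟩
  | n + 1, hstep, h0, ht => by
    by_cases hn : t ≤ h n
    · obtain ⟨z, hz, hzt⟩ :=
        exists_abs_sub_le_half_of_le_of_le hc (fun z hz => hstep z (by omega)) h0 hn
      exact ⟨z, by omega, hzt⟩
    · have hlast := (abs_le.mp (hstep n n.lt_succ_self)).2
      by_cases hup : h (n + 1) - t ≤ c / 2
      · exact ⟨n + 1, le_rfl, abs_le.mpr ⟨by linarith, hup⟩⟩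
      · exact ⟨n, by omega, abs_le.mpr ⟨by linarith, by linarith⟩⟩

theorem exists_abs_sub_le_half_of_mem_uIcc {h : ℕ → ℝ} {c t : ℝ} {n : ℕ} (hc : 0 ≤ c)
    (hstep : ∀ z < n, |h (z + 1) - h z| ≤ c) (ht : t ∈ Set.uIcc (h 0) (h n)) :
    ∃ z ≤ n, |h z - t| ≤ c / 2 := by
  rcases Set.mem_uIcc.mp ht with ⟨h0, hn⟩ | ⟨hn, h0⟩
  · exact exists_abs_sub_le_half_of_le_of_le hc hstep h0 hn
  · have hstep' : ∀ z < n, |-h (z + 1) - -h z| ≤ c := fun z hz => by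
      rw [← abs_neg]; convert hstep z hz using 2; ring
    obtain ⟨z, hz, hzt⟩ :=
      exists_abs_sub_le_half_of_le_of_le (h := fun z => -h z) hc hstep' (neg_le_neg h0)
        (neg_le_neg hn)
    exact ⟨z, hz, by rwa [← abs_neg, neg_sub, sub_neg_eq_add, neg_add_eq_sub] at hzt⟩

theorem sum_Icc_one_add_sum_Icc_succ (F : ℕ → ℝ) {z n : ℕ} (hz : z ≤ n) :
    ∑ i ∈ Icc 1 z, F i + ∑ i ∈ Icc (z + 1) n, F i = ∑ i ∈ Icc 1 n, F i := by
  simpa only [← Icc_add_one_left_eq_Ioc, zero_add] using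
    sum_Ioc_consecutive F (Nat.zero_le z) hz

def splitSum (A B : ℕ → ℝ) (n z : ℕ) : ℝ :=
  ∑ i ∈ Icc 1 z, A i + ∑ i ∈ Icc (z + 1) n, B i

theorem splitSum_zero (A B : ℕ → ℝ) (n : ℕ) : splitSum A B n 0 = ∑ i ∈ Icc 1 n, B i := by
  simp [splitSum]

theorem splitSum_self (A B : ℕ → ℝ) (n : ℕ) : splitSum A B n n = ∑ i ∈ Icc 1 n, A i := by
  simp [splitSum]

theorem splitSum_add_splitSum_swap (A B : ℕ → ℝ) {n z : ℕ} (hz : z ≤ n) :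
    splitSum A B n z + splitSum B A n z = ∑ i ∈ Icc 1 n, A i + ∑ i ∈ Icc 1 n, B i := by
  rw [← sum_Icc_one_add_sum_Icc_succ A hz, ← sum_Icc_one_add_sum_Icc_succ B hz, splitSum,
    splitSum]
  ring

theorem splitSum_succ_sub (A B : ℕ → ℝ) {n z : ℕ} (hz : z < n) :
    splitSum A B n (z + 1) - splitSum A B n z = A (z + 1) - B (z + 1) := by
  have hA : ∑ i ∈ Icc 1 (z + 1), A i = ∑ i ∈ Icc 1 z, A i + A (z + 1) :=
    sum_Icc_succ_top (by omega) A
  have hB : ∑ i ∈ Icc (z + 1) n, B i = B (z + 1) + ∑ i ∈ Icc (z + 1 + 1) n, B i := by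
    rw [Icc_add_one_left_eq_Ioc (z + 1), add_sum_Ioc_eq_sum_Icc hz]
  rw [splitSum, splitSum, hA, hB]
  ring

theorem exists_balanced_swap_general (n : ℕ) (c : ℝ) (hc : 0 ≤ c)
    (A B : ℕ → ℝ)
    (hA : ∀ i ∈ Finset.Icc 1 n, 0 ≤ A i ∧ A i ≤ c)
    (hB : ∀ i ∈ Finset.Icc 1 n, 0 ≤ B i ∧ B i ≤ c) :
    ∃ z ≤ n,
      (∑ i ∈ Finset.Icc 1 z, A i + ∑ i ∈ Finset.Icc (z + 1) n, B i ≤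
        (∑ i ∈ Finset.Icc 1 n, A i + ∑ i ∈ Finset.Icc 1 n, B i) / 2 + c / 2) ∧
      (∑ i ∈ Finset.Icc 1 z, B i + ∑ i ∈ Finset.Icc (z + 1) n, A i ≤
        (∑ i ∈ Finset.Icc 1 n, A i + ∑ i ∈ Finset.Icc 1 n, B i) / 2 + c / 2) := by
  set T := ∑ i ∈ Icc 1 n, A i + ∑ i ∈ Icc 1 n, B i
  have hstep : ∀ z < n, |splitSum A B n (z + 1) - splitSum A B n z| ≤ c := fun z hz => by
    have hmem : z + 1 ∈ Icc 1 n := mem_Icc.mpr ⟨by omega, hz⟩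
    obtain ⟨hA0, hAc⟩ := hA _ hmem
    obtain ⟨hB0, hBc⟩ := hB _ hmem
    rw [splitSum_succ_sub A B hz, abs_le]
    constructor <;> linarith
  have hmid : T / 2 ∈ Set.uIcc (splitSum A B n 0) (splitSum A B n n) := by
    rw [splitSum_zero, splitSum_self, Set.mem_uIcc]
    by_cases h : ∑ i ∈ Icc 1 n, B i ≤ ∑ i ∈ Icc 1 n, A i
    · exact Or.inl ⟨by linarith, by linarith⟩
    · exact Or.inr ⟨by linarith, by linarith⟩
  obtain ⟨z, hz, hclose⟩ := exists_abs_sub_le_half_of_mem_uIcc hc hstep hmid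
  have hsum := splitSum_add_splitSum_swap A B hz
  obtain ⟨hlow, hhigh⟩ := abs_le.mp hclose
  exact ⟨z, hz, show splitSum A B n z ≤ T / 2 + c / 2 by linarith,
    show splitSum B A n z ≤ T / 2 + c / 2 by linarith⟩

/-- Swapping lemma: for two sequences `A`, `B` of reals in `[0, c]` of length `n`
there is a split index `z ∈ {0,…,n}` such that after swapping the suffixes beyond `z`,
each of the two resulting totals is at most the average of the two original totals
plus `c/2`. -/
theorem exists_balanced_swap (n : ℕ) (hn : 1 ≤ n) (c : ℝ) (hc : 0 ≤ c)
    (A B : ℕ → ℝ)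
    (hA : ∀ i ∈ Finset.Icc 1 n, 0 ≤ A i ∧ A i ≤ c)
    (hB : ∀ i ∈ Finset.Icc 1 n, 0 ≤ B i ∧ B i ≤ c) :
    ∃ z ≤ n,
      (∑ i ∈ Finset.Icc 1 z, A i + ∑ i ∈ Finset.Icc (z + 1) n, B i ≤
        (∑ i ∈ Finset.Icc 1 n, A i + ∑ i ∈ Finset.Icc 1 n, B i) / 2 + c / 2) ∧
      (∑ i ∈ Finset.Icc 1 z, B i + ∑ i ∈ Finset.Icc (z + 1) n, A i ≤
        (∑ i ∈ Finset.Icc 1 n, A i + ∑ i ∈ Finset.Icc 1 n, B i) / 2 + c / 2) :=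
  exists_balanced_swap_general n c hc A B hA hB
end

section
/- Let ε > 0, D ≥ 0, OPT ≥ 0 be reals, let k ≥ 1 be an integer (regarded as a real), let r be a real with 1 ≤ r ≤ k·log_b k where b = (2+2ε)/(2+ε), and set β = 2(1+ε)·D·(3/2 + log_b k). Suppose real numbers H, L, H' satisfy H' ≤ (3/2)·D + H/2 + L/2, L ≤ (OPT + 2(r−1)·D)/k, and H > (1+ε)·OPT/k + β. Then H' ≤ ((2+ε)/(2+2ε))·H. -/
/-! Put `c = log_b k`. Since `r ≤ k c`, the minimum cost is at most `OPT/k + 2cD`, so the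
threshold `(1+ε)·OPT/k + β` is at least `(1+ε)(3D + L)`. Hence `(3D + L)/2 < H/(2+2ε)`, and
`H' ≤ (3D + L)/2 + H/2 < H/(2+2ε) + H/2 = ((2+ε)/(2+2ε))·H`. -/

namespace SwapRound

theorem min_cost_le {k D r c OPT L : ℝ} (hk : 0 < k) (hD : 0 ≤ D) (hr : r ≤ k * c)
    (hL : L ≤ (OPT + 2 * (r - 1) * D) / k) : L ≤ OPT / k + 2 * c * D := by
  have hrD : 2 * (r - 1) * D ≤ 2 * (k * c) * D := by gcongr; linarith
  calc L ≤ (OPT + 2 * (r - 1) * D) / k := hL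
    _ ≤ (OPT + 2 * (k * c) * D) / k := by gcongr
    _ = OPT / k + 2 * c * D := by field_simp

theorem new_max_le_of_threshold_lt {ε D L H H' : ℝ} (hε1 : 0 < 1 + ε)
    (hH : (1 + ε) * (3 * D + L) < H)
    (hH' : H' ≤ (3 / 2) * D + H / 2 + L / 2) : H' ≤ ((2 + ε) / (2 + 2 * ε)) * H := by
  have hsplit : (2 + ε) / (2 + 2 * ε) * H = H / (2 * (1 + ε)) + H / 2 := by
    field_simp; ring
  have hcost : 3 * D + L < H / (1 + ε) := by rwa [lt_div_iff₀ hε1, mul_comm]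
  rw [hsplit, div_mul_eq_div_div_swap]
  linarith

end SwapRound

open SwapRound in
theorem swap_round_decrease_general (ε D OPT : ℝ) (hε : 0 < ε) (hD : 0 ≤ D)
    (k : ℕ) (hk : 1 ≤ k) (r : ℝ)
    (hr2 : r ≤ (k : ℝ) * Real.logb ((2 + 2 * ε) / (2 + ε)) k)
    (H L H' : ℝ)
    (hH' : H' ≤ (3 / 2) * D + H / 2 + L / 2)
    (hL : L ≤ (OPT + 2 * (r - 1) * D) / k)
    (hH : H > (1 + ε) * OPT / k
      + 2 * (1 + ε) * D * (3 / 2 + Real.logb ((2 + 2 * ε) / (2 + ε)) k)) :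
    H' ≤ ((2 + ε) / (2 + 2 * ε)) * H := by
  set c := Real.logb ((2 + 2 * ε) / (2 + ε)) k
  have hkpos : (0 : ℝ) < k := by exact_mod_cast hk
  have hLc : L ≤ OPT / k + 2 * c * D := min_cost_le hkpos hD hr2 hL
  have hthreshold : (1 + ε) * (3 * D + L) < H :=
    calc (1 + ε) * (3 * D + L) ≤ (1 + ε) * (3 * D + (OPT / k + 2 * c * D)) := by gcongr
      _ = (1 + ε) * OPT / k + 2 * (1 + ε) * D * (3 / 2 + c) := by ring
      _ < H := hH
  exact new_max_le_of_threshold_lt (by linarith) hthreshold hH'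

/-- One-round decrease bound for the offline swapping algorithm: if `H'` is bounded by
`(3/2)·D + H/2 + L/2`, the minimum cost `L` is at most the average
`(OPT + 2(r−1)·D)/k`, and the maximum cost `H` exceeds the fairness threshold
`(1+ε)·OPT/k + β` with `β = 2(1+ε)·D·(3/2 + log_b k)` and `b = (2+2ε)/(2+ε)`,
then `H' ≤ ((2+ε)/(2+2ε))·H`. -/
theorem swap_round_decrease (ε D OPT : ℝ) (hε : 0 < ε) (hD : 0 ≤ D) (hOPT : 0 ≤ OPT)
    (k : ℕ) (hk : 1 ≤ k) (r : ℝ) (hr1 : 1 ≤ r)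
    (hr2 : r ≤ (k : ℝ) * Real.logb ((2 + 2 * ε) / (2 + ε)) k)
    (H L H' : ℝ)
    (hH' : H' ≤ (3 / 2) * D + H / 2 + L / 2)
    (hL : L ≤ (OPT + 2 * (r - 1) * D) / k)
    (hH : H > (1 + ε) * OPT / k
      + 2 * (1 + ε) * D * (3 / 2 + Real.logb ((2 + 2 * ε) / (2 + ε)) k)) :
    H' ≤ ((2 + ε) / (2 + 2 * ε)) * H :=
  swap_round_decrease_general ε D OPT hε hD k hk r hr2 H L H' hH' hL hH
end
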